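/- arXiv:2412.19831 — 8 statements merged into one kernel-verified Lean document; each statement's English description precedes it below -/
import Mathlib

section
/- Let N ≥ 1 be an integer and f a real number with f ≥ 1/N. Then the polynomial ch_N(z) = z^N − f·(z^{N−1} + ⋯ + z + 1) has a real root λ with λ ≥ 1 such that every complex root z of ch_N with z ≠ λ satisfies |z| < λ. In particular this dominant root is unique. -/
/-- `ch_N(z) = z^N - f·(z^{N-1} + ⋯ + z + 1)`, the characteristic polynomial of the
simple Leslie matrix of order `N` with constant fertility rate `f`, as a function on `ℂ`. -/
noncomputable def chLeslie (N : ℕ) (f : ℝ) (z : ℂ) : ℂ :=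
  z ^ N - (f : ℂ) * ∑ j ∈ Finset.range N, z ^ j

/-!
Substituting `w = z⁻¹`, a nonzero `z` is a root of `ch_N` exactly when
`f · (w + w² + ⋯ + w^N) = 1`. On `[0, ∞)` the left side is strictly increasing, vanishes at `0`
and is `f N ≥ 1` at `1`, so it takes the value `1` at a unique `t ∈ (0, 1]`; put `λ = t⁻¹`.
For any other root, `1 = f · Re (w + ⋯ + w^N) ≤ f · (|w| + ⋯ + |w|^N)`, with strict inequality
unless `w` is a nonnegative real. Hence either `w = t`, or `|w| > t`, i.e. `|z| < λ`.
-/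

open Finset
open scoped ComplexOrder

lemma pow_mul_sum_inv_pow_succ {K : Type*} [Field K] {x : K} (hx : x ≠ 0) (N : ℕ) :
    x ^ N * ∑ j ∈ range N, x⁻¹ ^ (j + 1) = ∑ j ∈ range N, x ^ j := by
  induction N with
  | zero => simp
  | succ N ih =>
    rw [sum_range_succ, mul_add, ← mul_pow, mul_inv_cancel₀ hx, one_pow, pow_succ', mul_assoc, ih,
      mul_sum, sum_range_succ']
    simp only [pow_succ', pow_zero]

lemma chLeslie_eq_zero_iff {N : ℕ} {f : ℝ} {z : ℂ} (hz : z ≠ 0) :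
    chLeslie N f z = 0 ↔ (f : ℂ) * ∑ j ∈ range N, z⁻¹ ^ (j + 1) = 1 := by
  have : chLeslie N f z = z ^ N * (1 - f * ∑ j ∈ range N, z⁻¹ ^ (j + 1)) := by
    rw [chLeslie, ← pow_mul_sum_inv_pow_succ hz]
    ring
  rw [this, mul_eq_zero, or_iff_right (pow_ne_zero N hz), sub_eq_zero, eq_comm]

lemma chLeslie_zero {N : ℕ} (hN : N ≠ 0) (f : ℝ) : chLeslie N f 0 = -f := by
  obtain ⟨n, rfl⟩ := Nat.exists_eq_succ_of_ne_zero hN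
  simp [chLeslie, sum_range_succ']

lemma strictMonoOn_sum_pow_succ {N : ℕ} (hN : N ≠ 0) :
    StrictMonoOn (fun t : ℝ ↦ ∑ j ∈ range N, t ^ (j + 1)) (Set.Ici 0) := by
  intro s hs t _ hst
  exact sum_lt_sum_of_nonempty (nonempty_range_iff.mpr hN) fun j _ ↦
    pow_lt_pow_left₀ hst hs (Nat.succ_ne_zero j)

lemma exists_mem_Ioc_mul_sum_pow_succ_eq_one {N : ℕ} {f : ℝ} (h : 1 ≤ f * N) :
    ∃ t ∈ Set.Ioc (0 : ℝ) 1, f * ∑ j ∈ range N, t ^ (j + 1) = 1 := by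
  have hcont : ContinuousOn (fun t : ℝ ↦ f * ∑ j ∈ range N, t ^ (j + 1)) (Set.Icc 0 1) := by
    fun_prop
  obtain ⟨t, ⟨ht0, ht1⟩, hft⟩ :=
    intermediate_value_Icc zero_le_one hcont (show (1 : ℝ) ∈ Set.Icc _ _ by simpa using h)
  refine ⟨t, ⟨ht0.lt_of_ne ?_, ht1⟩, hft⟩
  rintro rfl
  simp at hft

lemma re_sum_pow_succ_lt {N : ℕ} (hN : N ≠ 0) {w : ℂ} (hw : ¬0 ≤ w) :
    (∑ j ∈ range N, w ^ (j + 1)).re < ∑ j ∈ range N, ‖w‖ ^ (j + 1) := by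
  rw [Complex.re_sum]
  refine sum_lt_sum (fun j _ ↦ ?_) ⟨0, mem_range.mpr (Nat.pos_of_ne_zero hN), ?_⟩
  · exact (Complex.re_le_norm _).trans_eq (norm_pow w _)
  · simpa using (Complex.re_le_norm w).lt_of_ne (mt Complex.re_eq_norm.mp hw)

lemma lt_norm_of_mul_sum_pow_succ_eq_one {N : ℕ} (hN : N ≠ 0) {f t : ℝ} (hf : 0 < f)
    (ht : 0 ≤ t) (hft : f * ∑ j ∈ range N, t ^ (j + 1) = 1) {w : ℂ}
    (hfw : (f : ℂ) * ∑ j ∈ range N, w ^ (j + 1) = 1) (hwt : w ≠ t) : t < ‖w‖ := by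
  have hmono := strictMonoOn_sum_pow_succ hN
  by_cases hw : 0 ≤ w
  · obtain ⟨s, hs0, rfl⟩ : ∃ s : ℝ, 0 ≤ s ∧ w = s :=
      ⟨_, (Complex.nonneg_iff.mp hw).1, Complex.eq_re_of_ofReal_le (r := 0) (by simpa using hw)⟩
    have hst : s = t := hmono.injOn hs0 ht <| mul_left_cancel₀ hf.ne' <|
      hft ▸ by exact_mod_cast hfw
    exact absurd (congrArg _ hst) hwt
  · have hre := congrArg Complex.re hfw
    rw [Complex.re_ofReal_mul, Complex.one_re] at hre
    have hlt : f * ∑ j ∈ range N, t ^ (j + 1) < f * ∑ j ∈ range N, ‖w‖ ^ (j + 1) := by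
      rw [hft, ← hre]
      exact mul_lt_mul_of_pos_left (re_sum_pow_succ_lt hN hw) hf
    exact (hmono.lt_iff_lt ht (norm_nonneg _)).mp (lt_of_mul_lt_mul_left hlt hf.le)

/-- If `N ≥ 1` and `f ≥ 1/N`, then `ch_N` has a real root `λ ≥ 1` which strictly dominates
in modulus every other complex root; in particular this dominant root is unique. -/
theorem chLeslie_dominant_root (N : ℕ) (hN : 1 ≤ N) (f : ℝ) (hf : 1 / (N : ℝ) ≤ f) :
    ∃ lam : ℝ, 1 ≤ lam ∧ chLeslie N f (lam : ℂ) = 0 ∧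
      ∀ z : ℂ, chLeslie N f z = 0 → z ≠ (lam : ℂ) → ‖z‖ < lam := by
  have hN0 : N ≠ 0 := Nat.one_le_iff_ne_zero.mp hN
  have hNpos : (0 : ℝ) < N := by exact_mod_cast hN
  have hfpos : 0 < f := (one_div_pos.mpr hNpos).trans_le hf
  obtain ⟨t, ⟨ht0, ht1⟩, hft⟩ :=
    exists_mem_Ioc_mul_sum_pow_succ_eq_one ((div_le_iff₀ hNpos).mp hf)
  refine ⟨t⁻¹, (one_le_inv₀ ht0).mpr ht1, ?_, fun z hz hne ↦ ?_⟩
  · rw [chLeslie_eq_zero_iff (by exact_mod_cast (inv_pos.mpr ht0).ne')]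
    push_cast [inv_inv]
    exact_mod_cast hft
  have hz0 : z ≠ 0 := by rintro rfl; simp [chLeslie_zero hN0, hfpos.ne'] at hz
  have hzt : z⁻¹ ≠ t := fun h ↦ hne (by rw [← inv_inv z, h, Complex.ofReal_inv])
  have hlt := lt_norm_of_mul_sum_pow_succ_eq_one hN0 hfpos ht0.le hft
    ((chLeslie_eq_zero_iff hz0).mp hz) hzt
  rwa [norm_inv, lt_inv_comm₀ ht0 (norm_pos_iff.mpr hz0)] at hlt
end

section
/- Let N ≥ 1 be an integer and f a real number with 0 < f < 1/N. Then every complex root z of the polynomial ch_N(z) = z^N − f·(z^{N−1} + ⋯ + z + 1) satisfies |z| < 1. -/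
/-!
If `‖z‖ ≥ 1`, every term of `1 + z + ⋯ + z^{N-1}` has norm at most `‖z‖^N`, so a root of
`z^N = f (1 + z + ⋯ + z^{N-1})` satisfies `‖z‖^N ≤ f N ‖z‖^N`, impossible when `f N < 1`.
-/

open Finset

theorem norm_geom_sum_le_card_mul_norm_pow {R : Type*} [SeminormedRing R] [NormOneClass R]
    {z : R} (hz : 1 ≤ ‖z‖) (N : ℕ) :
    ‖∑ j ∈ range N, z ^ j‖ ≤ N * ‖z‖ ^ N :=
  calc ‖∑ j ∈ range N, z ^ j‖ ≤ ∑ j ∈ range N, ‖z ^ j‖ := norm_sum_le _ _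
    _ ≤ ∑ _j ∈ range N, ‖z‖ ^ N := by
      refine sum_le_sum fun j hj => (norm_pow_le z j).trans ?_
      exact pow_le_pow_right₀ hz (mem_range.mp hj).le
    _ = N * ‖z‖ ^ N := by rw [sum_const, card_range, nsmul_eq_mul]

theorem norm_lt_one_of_pow_eq_mul_geom_sum {K : Type*} [NormedDivisionRing K] {c z : K}
    {N : ℕ} (hc : ‖c‖ * N < 1) (h : z ^ N = c * ∑ j ∈ range N, z ^ j) : ‖z‖ < 1 := by
  by_contra! hz
  have hpos : 0 < ‖z‖ ^ N := pow_pos (zero_lt_one.trans_le hz) N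
  have hle : ‖z‖ ^ N ≤ ‖c‖ * N * ‖z‖ ^ N :=
    calc ‖z‖ ^ N = ‖c‖ * ‖∑ j ∈ range N, z ^ j‖ := by rw [← norm_pow, h, norm_mul]
      _ ≤ ‖c‖ * (N * ‖z‖ ^ N) := by
        gcongr
        exact norm_geom_sum_le_card_mul_norm_pow hz N
      _ = ‖c‖ * N * ‖z‖ ^ N := by ring
  linarith [mul_lt_mul_of_pos_right hc hpos]

theorem chLeslie_roots_lt_one_general (N : ℕ) (f : ℝ) (hf0 : 0 < f)
    (hf : f < 1 / (N : ℝ)) :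
    ∀ z : ℂ, chLeslie N f z = 0 → ‖z‖ < 1 := by
  intro z hz
  have hfN : ‖(f : ℂ)‖ * N < 1 := by
    rw [Complex.norm_real, Real.norm_of_nonneg hf0.le]
    rcases N.eq_zero_or_pos with rfl | hN
    · simp
    · rwa [lt_div_iff₀ (by exact_mod_cast hN)] at hf
  exact norm_lt_one_of_pow_eq_mul_geom_sum hfN (sub_eq_zero.mp hz)

/-- If `N ≥ 1` and `0 < f < 1/N`, then every complex root of `ch_N` has modulus
strictly less than `1`. -/
theorem chLeslie_roots_lt_one (N : ℕ) (hN : 1 ≤ N) (f : ℝ) (hf0 : 0 < f)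
    (hf : f < 1 / (N : ℝ)) :
    ∀ z : ℂ, chLeslie N f z = 0 → ‖z‖ < 1 :=
  chLeslie_roots_lt_one_general N f hf0 hf
end

section
/- Let N ≥ 1 be an integer and f a real number with f ≥ 1/N. Then every complex root z of ch_N(z) = z^N − f·(z^{N−1} + ⋯ + z + 1) satisfies |z| < 1 + f, and ch_N has a real root λ with λ ≥ 1 + f − 1/N. Consequently the largest real root λ_max of ch_N satisfies 1 + f − 1/N ≤ λ_max < 1 + f. -/
/-!
Since `(1 - z) · ∑_{j<N} z^j = 1 - z^N`, the polynomial can be rewritten as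
`ch_N(z) = 1 - (1 + f - z) · ∑_{j<N} z^j`. For `|z| ≥ 1 + f` the triangle inequality and this
identity at `r = |z|` give `f · ∑ |z|^j < |z|^N`, so `z` is not a root. On the real line the
identity takes the value `1` at `1 + f`, and at `a = 1 + f - 1/N ≥ 1` it equals
`1 - (1/N) ∑_{j<N} a^j ≤ 0` because each of the `N` powers is at least `1`; the intermediate
value theorem gives the real root in between.
-/

open Finset

lemma pow_sub_mul_geom_sum_eq {R : Type*} [CommRing R] (x c : R) (n : ℕ) :
    x ^ n - c * ∑ j ∈ range n, x ^ j = 1 - (1 + c - x) * ∑ j ∈ range n, x ^ j := by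
  linear_combination geom_sum_mul_neg x n

lemma mul_geom_sum_lt_pow {f r : ℝ} (hf : 0 ≤ f) (hr : 1 + f ≤ r) (n : ℕ) :
    f * ∑ j ∈ range n, r ^ j < r ^ n := by
  have hsum : 0 ≤ ∑ j ∈ range n, r ^ j := sum_nonneg fun j _ ↦ pow_nonneg (by linarith) j
  have := pow_sub_mul_geom_sum_eq r f n
  nlinarith

lemma chLeslie_ofReal (N : ℕ) (f x : ℝ) :
    chLeslie N f x = ((1 - (1 + f - x) * ∑ j ∈ range N, x ^ j : ℝ) : ℂ) := by
  rw [chLeslie, pow_sub_mul_geom_sum_eq]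
  push_cast
  rfl

lemma norm_lt_of_chLeslie_eq_zero {N : ℕ} {f : ℝ} (hf : 0 ≤ f) {z : ℂ}
    (hz : chLeslie N f z = 0) : ‖z‖ < 1 + f := by
  by_contra! hr
  have hle : ‖z‖ ^ N ≤ f * ∑ j ∈ range N, ‖z‖ ^ j :=
    calc ‖z‖ ^ N = ‖(f : ℂ) * ∑ j ∈ range N, z ^ j‖ := by
          rw [← norm_pow, ← sub_eq_zero.mp hz]
      _ ≤ f * ∑ j ∈ range N, ‖z‖ ^ j := by
          rw [norm_mul, Complex.norm_real, Real.norm_of_nonneg hf]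
          gcongr
          exact (norm_sum_le _ _).trans_eq (by simp only [norm_pow])
  exact (mul_geom_sum_lt_pow hf hr N).not_ge hle

lemma exists_chLeslie_ofReal_eq_zero_ge {N : ℕ} (hN : 1 ≤ N) {f : ℝ} (hf : 1 / (N : ℝ) ≤ f) :
    ∃ lam : ℝ, chLeslie N f lam = 0 ∧ 1 + f - 1 / (N : ℝ) ≤ lam := by
  set g : ℝ → ℝ := fun x ↦ 1 - (1 + f - x) * ∑ j ∈ range N, x ^ j
  set a := 1 + f - 1 / (N : ℝ)
  have hNpos : (0 : ℝ) < N := by exact_mod_cast hN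
  have ha : 1 ≤ a := by linarith
  have hga : g a ≤ 0 := by
    have hsum : (N : ℝ) ≤ ∑ j ∈ range N, a ^ j := by
      simpa using card_nsmul_le_sum (range N) (a ^ ·) 1 fun j _ ↦ one_le_pow₀ ha
    have hcoeff : 1 + f - a = 1 / (N : ℝ) := by ring
    simp only [g, hcoeff]
    rw [sub_nonpos, div_mul_eq_mul_div, one_mul, one_le_div hNpos]
    exact hsum
  have hgb : g (1 + f) = 1 := by simp [g]
  have hab : a ≤ 1 + f := by simp only [a]; linarith [one_div_pos.mpr hNpos]
  have hcont : ContinuousOn g (Set.Icc a (1 + f)) := by fun_prop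
  obtain ⟨lam, hlam, hglam⟩ :=
    intermediate_value_Icc hab hcont ⟨hga, hgb.symm ▸ zero_le_one⟩
  exact ⟨lam, by rw [chLeslie_ofReal]; exact_mod_cast hglam, hlam.1⟩

/-- If `N ≥ 1` and `f ≥ 1/N`, then every complex root of `ch_N` has modulus `< 1 + f`,
`ch_N` has a real root `λ ≥ 1 + f - 1/N`, and consequently any largest real root `λ_max`
satisfies `1 + f - 1/N ≤ λ_max < 1 + f`. -/
theorem chLeslie_root_bounds (N : ℕ) (hN : 1 ≤ N) (f : ℝ) (hf : 1 / (N : ℝ) ≤ f) :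
    (∀ z : ℂ, chLeslie N f z = 0 → ‖z‖ < 1 + f) ∧
    (∃ lam : ℝ, chLeslie N f (lam : ℂ) = 0 ∧ 1 + f - 1 / (N : ℝ) ≤ lam) ∧
    (∀ lmax : ℝ, chLeslie N f (lmax : ℂ) = 0 →
      (∀ μ : ℝ, chLeslie N f (μ : ℂ) = 0 → μ ≤ lmax) →
      1 + f - 1 / (N : ℝ) ≤ lmax ∧ lmax < 1 + f) := by
  have hf₀ : 0 ≤ f := (one_div_nonneg.mpr N.cast_nonneg).trans hf
  obtain ⟨lam, hlam, hlam_ge⟩ := exists_chLeslie_ofReal_eq_zero_ge hN hf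
  refine ⟨fun z ↦ norm_lt_of_chLeslie_eq_zero hf₀, ⟨lam, hlam, hlam_ge⟩, fun lmax hroot hmax ↦ ⟨hlam_ge.trans (hmax lam hlam), ?_⟩⟩
  calc lmax ≤ ‖(lmax : ℂ)‖ := by rw [Complex.norm_real]; exact le_abs_self lmax
    _ < 1 + f := norm_lt_of_chLeslie_eq_zero hf₀ hroot
end

section
/- Let N ≥ 1 be an integer and f a real number with f ≥ 1/N. Then the simple Leslie matrix L_f of order N has a real eigenvalue λ ≥ 1 (i.e., λ, viewed as a complex number, is an eigenvalue of L_f regarded as a complex matrix) such that every complex eigenvalue μ of L_f with μ ≠ λ satisfies |μ| < λ. -/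
/-!
The subdiagonal of `L_f` forces an eigenvector for `μ` to be a multiple of `(μ ^ (N - 1 - i))ᵢ`,
and the first row then reads `μ ^ N = f (1 + μ + ⋯ + μ ^ (N - 1))`. For `μ ≠ 0` this is the
Euler–Lotka equation `f ∑_{k=1}^{N} μ⁻ᵏ = 1`. On `(0, ∞)` its left side is continuous, strictly
decreasing, `≥ 1` at `1` (as `f N ≥ 1`) and `≤ 1` at `f N`, so it has a unique positive root
`λ ≥ 1`. For any other root `μ`, taking real parts gives `1 = f ∑ Re μ⁻ᵏ < f ∑ |μ|⁻ᵏ`, strictly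
because `μ⁻¹` is not a nonnegative real; by monotonicity `|μ| < λ`.
-/

/-- The simple Leslie matrix of order `N` with constant fertility rate `f`:
first row all `f`, subdiagonal entries `1`, all other entries `0`. -/
def leslieSimple (N : ℕ) (f : ℝ) : Matrix (Fin N) (Fin N) ℝ :=
  fun i j => if i.val = 0 then f else if i.val = j.val + 1 then 1 else 0

open Finset Matrix
open scoped ComplexOrder

theorem Matrix.isRoot_charpoly_iff_exists_mulVec_eq_smul {K n : Type*} [Field K] [Fintype n]
    [DecidableEq n] (A : Matrix n n K) (μ : K) :
    A.charpoly.IsRoot μ ↔ ∃ v ≠ 0, A *ᵥ v = μ • v := by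
  simp only [Polynomial.IsRoot, eval_charpoly, ← exists_mulVec_eq_zero_iff, sub_mulVec,
    sub_eq_zero, scalar_apply]
  simp [funext_iff, eq_comm]

theorem Fin.sum_pow_sub_eq_sum_range {R : Type*} [CommSemiring R] (n : ℕ) (μ : R) :
    ∑ i : Fin (n + 1), μ ^ (n - i : ℕ) = ∑ k ∈ range (n + 1), μ ^ k :=
  (Fin.sum_univ_eq_sum_range (fun i => μ ^ (n - i)) _).trans (sum_range_reflect (μ ^ ·) _)

theorem Fin.eq_pow_mul_last_of_forall_castSucc {R : Type*} [CommSemiring R] {n : ℕ}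
    {v : Fin (n + 1) → R} {μ : R} (hv : ∀ i : Fin n, v i.castSucc = μ * v i.succ)
    (i : Fin (n + 1)) : v i = μ ^ (n - i : ℕ) * v (Fin.last n) := by
  induction i using Fin.reverseInduction with
  | last => simp
  | cast i ih =>
    rw [hv, ih, ← mul_assoc, ← pow_succ']
    congr 2
    simp only [Fin.val_succ, Fin.val_castSucc]
    omega

def eulerLotka {K : Type*} [Field K] (N : ℕ) (f z : K) : K :=
  f * ∑ k ∈ range N, (z ^ (k + 1))⁻¹

section EulerLotka

variable {K : Type*} [Field K] (N : ℕ) (f : K) {z : K}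

theorem pow_mul_eulerLotka (hz : z ≠ 0) :
    z ^ N * eulerLotka N f z = f * ∑ k ∈ range N, z ^ k := by
  rw [eulerLotka, mul_left_comm, mul_sum, ← sum_range_reflect]
  refine congrArg _ (sum_congr rfl fun k hk => ?_)
  have hkN := mem_range.1 hk
  rw [← pow_sub₀ z hz (by omega)]
  congr 1
  omega

theorem eulerLotka_eq_one_iff (hz : z ≠ 0) :
    eulerLotka N f z = 1 ↔ z ^ N = f * ∑ k ∈ range N, z ^ k := by
  rw [← pow_mul_eulerLotka N f hz, eq_comm (a := z ^ N), mul_eq_left₀ (pow_ne_zero N hz)]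

end EulerLotka

section Real

variable {N : ℕ} {f : ℝ}

theorem eulerLotka_strictAntiOn (hN : N ≠ 0) (hf : 0 < f) :
    StrictAntiOn (eulerLotka N f) (Set.Ioi 0) := by
  intro s hs t _ hst
  refine mul_lt_mul_of_pos_left
    (sum_lt_sum_of_nonempty (nonempty_range_iff.2 hN) fun k _ => ?_) hf
  exact inv_strictAnti₀ (pow_pos hs _) (pow_lt_pow_left₀ hst hs.le k.succ_ne_zero)

theorem continuousOn_eulerLotka : ContinuousOn (eulerLotka N f) (Set.Ioi 0) :=
  continuousOn_const.mul <| continuousOn_finsetSum _ fun _ _ =>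
    (continuousOn_pow _).inv₀ fun _ hx => pow_ne_zero _ (ne_of_gt hx)

theorem eulerLotka_le_div (hf : 0 ≤ f) {t : ℝ} (ht : 1 ≤ t) : eulerLotka N f t ≤ f * N / t := by
  have hterm (k : ℕ) : (t ^ (k + 1))⁻¹ ≤ t⁻¹ :=
    inv_anti₀ (by positivity) (le_self_pow₀ ht k.succ_ne_zero)
  calc eulerLotka N f t ≤ f * ∑ _k ∈ range N, t⁻¹ :=
        mul_le_mul_of_nonneg_left (sum_le_sum fun k _ => hterm k) hf
    _ = f * N / t := by simp [div_eq_mul_inv, mul_assoc]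

theorem exists_one_le_eulerLotka_eq_one (hf : 1 ≤ f * N) :
    ∃ lam, 1 ≤ lam ∧ eulerLotka N f lam = 1 := by
  have hf0 : 0 < f := pos_of_mul_pos_left (one_pos.trans_le hf) N.cast_nonneg
  have hb : eulerLotka N f (f * N) ≤ 1 :=
    (eulerLotka_le_div hf0.le hf).trans_eq (div_self (by positivity))
  have ha : 1 ≤ eulerLotka N f 1 := by simpa [eulerLotka] using hf
  obtain ⟨lam, hlam, hlam_eq⟩ := intermediate_value_Icc' hf
    (continuousOn_eulerLotka.mono fun x hx => one_pos.trans_le hx.1) ⟨hb, ha⟩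
  exact ⟨lam, hlam.1, hlam_eq⟩

end Real

theorem eulerLotka_ofReal (N : ℕ) (f x : ℝ) :
    eulerLotka N (f : ℂ) x = eulerLotka N f x := by
  simp [eulerLotka]

theorem re_eulerLotka_lt {N : ℕ} (hN : N ≠ 0) {f : ℝ} (hf : 0 < f) {z : ℂ} (hz : ¬ 0 ≤ z) :
    (eulerLotka N (f : ℂ) z).re < eulerLotka N f ‖z‖ := by
  rw [eulerLotka, eulerLotka, Complex.re_ofReal_mul, Complex.re_sum]
  refine mul_lt_mul_of_pos_left
    (sum_lt_sum (fun k _ => ?_) ⟨0, by simp [Nat.pos_of_ne_zero hN], ?_⟩) hf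
  · simpa using Complex.re_le_norm (z ^ (k + 1))⁻¹
  · have hz' : ¬ 0 ≤ z⁻¹ := by rwa [inv_nonneg]
    simpa using (Complex.re_le_norm z⁻¹).lt_of_ne (mt Complex.re_eq_norm.1 hz')

theorem norm_lt_of_eulerLotka_eq_one {N : ℕ} (hN : N ≠ 0) {f : ℝ} (hf : 0 < f) {lam : ℝ}
    (hlam0 : 0 < lam) (hlam : eulerLotka N f lam = 1) {μ : ℂ} (hμ0 : μ ≠ 0)
    (hμ : eulerLotka N (f : ℂ) μ = 1) (hne : μ ≠ lam) : ‖μ‖ < lam := by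
  have hanti := eulerLotka_strictAntiOn hN hf
  have hnorm : 0 < ‖μ‖ := norm_pos_iff.2 hμ0
  by_cases hμ_nonneg : 0 ≤ μ
  · have hμ_real : μ = (‖μ‖ : ℂ) :=
      (Complex.eq_re_of_ofReal_le hμ_nonneg).trans (congrArg _ (Complex.re_eq_norm.2 hμ_nonneg))
    have hEL : eulerLotka N f ‖μ‖ = eulerLotka N f lam := by
      rw [hlam, ← Complex.ofReal_inj, ← eulerLotka_ofReal, ← hμ_real, hμ, Complex.ofReal_one]
    exact absurd (hμ_real.trans (congrArg _ (hanti.injOn hnorm hlam0 hEL))) hne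
  · rw [← hanti.lt_iff_gt hlam0 hnorm, hlam]
    simpa [hμ] using re_eulerLotka_lt hN hf hμ_nonneg

section Leslie

variable {K : Type*} [Field K] (φ : ℝ →+* K) {n : ℕ} (f : ℝ)

theorem leslieSimple_map_mulVec_zero (v : Fin (n + 1) → K) :
    ((leslieSimple (n + 1) f).map φ *ᵥ v) 0 = φ f * ∑ i, v i := by
  simp [mulVec, dotProduct, leslieSimple, mul_sum]

theorem leslieSimple_map_mulVec_succ (v : Fin (n + 1) → K) (i : Fin n) :
    ((leslieSimple (n + 1) f).map φ *ᵥ v) i.succ = v i.castSucc := by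
  have hrow (j : Fin (n + 1)) :
      leslieSimple (n + 1) f i.succ j = if i.castSucc = j then 1 else 0 := by
    simp [leslieSimple, Fin.ext_iff]
  simp [mulVec, dotProduct, hrow]

theorem leslieSimple_map_mulVec_eq_smul_iff (v : Fin (n + 1) → K) (μ : K) :
    (leslieSimple (n + 1) f).map φ *ᵥ v = μ • v ↔
      μ * v 0 = φ f * ∑ i, v i ∧ ∀ i : Fin n, v i.castSucc = μ * v i.succ := by
  simp only [funext_iff, Fin.forall_fin_succ (n := n), leslieSimple_map_mulVec_zero,
    leslieSimple_map_mulVec_succ, Pi.smul_apply, smul_eq_mul]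
  exact and_congr eq_comm Iff.rfl

theorem isRoot_charpoly_leslieSimple_map_iff (μ : K) :
    ((leslieSimple (n + 1) f).map φ).charpoly.IsRoot μ ↔
      μ ^ (n + 1) = φ f * ∑ k ∈ range (n + 1), μ ^ k := by
  rw [isRoot_charpoly_iff_exists_mulVec_eq_smul]
  constructor
  · rintro ⟨v, hv0, hv⟩
    obtain ⟨hrow0, hchain⟩ := (leslieSimple_map_mulVec_eq_smul_iff φ f v μ).1 hv
    have hv_eq := Fin.eq_pow_mul_last_of_forall_castSucc hchain
    have hlast : v (Fin.last n) ≠ 0 := fun h => hv0 (funext fun i => by simp [hv_eq i, h])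
    have hsum : ∑ i, v i = (∑ k ∈ range (n + 1), μ ^ k) * v (Fin.last n) := by
      rw [← Fin.sum_pow_sub_eq_sum_range, sum_mul]
      exact sum_congr rfl fun i _ => hv_eq i
    rw [hv_eq 0, hsum] at hrow0
    simp only [Fin.val_zero, Nat.sub_zero, ← mul_assoc, ← pow_succ'] at hrow0
    exact mul_right_cancel₀ hlast hrow0
  · intro hμ
    refine ⟨fun i => μ ^ (n - i : ℕ), fun h => by simpa using congrFun h (Fin.last n), ?_⟩
    refine (leslieSimple_map_mulVec_eq_smul_iff φ f _ μ).2 ⟨?_, fun i => ?_⟩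
    · simpa [Fin.sum_pow_sub_eq_sum_range, ← pow_succ'] using hμ
    · rw [← pow_succ']
      congr 1
      simp only [Fin.val_succ, Fin.val_castSucc]
      omega

theorem isRoot_charpoly_leslieSimple_map_iff_eulerLotka (hf : φ f ≠ 0) (μ : K) :
    ((leslieSimple (n + 1) f).map φ).charpoly.IsRoot μ ↔
      μ ≠ 0 ∧ eulerLotka (n + 1) (φ f) μ = 1 := by
  rw [isRoot_charpoly_leslieSimple_map_iff]
  by_cases hμ : μ = 0
  · simpa [hμ] using hf.symm
  · rw [eulerLotka_eq_one_iff _ _ hμ]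
    exact (and_iff_right hμ).symm

end Leslie

/-- If `N ≥ 1` and `f ≥ 1/N`, the simple Leslie matrix `L_f` (regarded as a complex matrix)
has a real eigenvalue `λ ≥ 1` which strictly dominates in modulus every other complex
eigenvalue.  (Complex eigenvalues are the roots of the characteristic polynomial.) -/
theorem leslie_dominant_eigenvalue (N : ℕ) (hN : 1 ≤ N) (f : ℝ) (hf : 1 / (N : ℝ) ≤ f) :
    ∃ lam : ℝ, 1 ≤ lam ∧
      ((leslieSimple N f).map (Complex.ofReal ·)).charpoly.IsRoot (lam : ℂ) ∧
      ∀ μ : ℂ, ((leslieSimple N f).map (Complex.ofReal ·)).charpoly.IsRoot μ →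
        μ ≠ (lam : ℂ) → ‖μ‖ < lam := by
  obtain ⟨n, rfl⟩ := Nat.exists_eq_add_of_le' hN
  have hfN : 1 ≤ f * (n + 1 : ℕ) := (div_le_iff₀ (by positivity)).1 hf
  have hf0 : 0 < f := pos_of_mul_pos_left (one_pos.trans_le hfN) (Nat.cast_nonneg _)
  have hroot := isRoot_charpoly_leslieSimple_map_iff_eulerLotka (n := n) Complex.ofRealHom f
    (Complex.ofReal_ne_zero.2 hf0.ne')
  obtain ⟨lam, hlam1, hlam⟩ := exists_one_le_eulerLotka_eq_one hfN
  have hlam0 : 0 < lam := one_pos.trans_le hlam1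
  refine ⟨lam, hlam1, (hroot _).2 ⟨by exact_mod_cast hlam0.ne', ?_⟩, fun μ hμ hne => ?_⟩
  · simpa [eulerLotka_ofReal] using congrArg Complex.ofReal hlam
  · obtain ⟨hμ0, hμ⟩ := (hroot μ).1 hμ
    exact norm_lt_of_eulerLotka_eq_one n.succ_ne_zero hf0 hlam0 hlam hμ0 hμ hne
end

section
/- Let N ≥ 1 be an integer, let f₁, …, f_N be real numbers with average f = (f₁ + ⋯ + f_N)/N, and suppose f ≠ 0. Then the simple Leslie matrix L_f of order N is invertible, and L_f⁻¹ · L_{f₁,…,f_N} = I + C, where C is the N×N matrix whose last row has j-th entry f_j/f − 1 for 1 ≤ j ≤ N and all of whose other entries are 0. -/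
/-- The general Leslie matrix of order `N` with fertility rates `F 0, …, F (N-1)`:
first row `(F 0, …, F (N-1))`, subdiagonal entries `1`, all other entries `0`. -/
def leslieGeneral (N : ℕ) (F : Fin N → ℝ) : Matrix (Fin N) (Fin N) ℝ :=
  fun i j => if i.val = 0 then F j else if i.val = j.val + 1 then 1 else 0

/-- The correction matrix `C`: its last row has `j`-th entry `F j / f - 1`,
and all other entries are `0`. -/
noncomputable def leslieCorrection (N : ℕ) (F : Fin N → ℝ) (f : ℝ) : Matrix (Fin N) (Fin N) ℝ :=
  fun i j => if i.val = N - 1 then F j / f - 1 else 0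

/-!
`L_f` sends the last basis vector to `f` times the first one, so `L_f C` is zero except for its
first row `(F j - f)_j`, which is exactly `L_F - L_f`; hence `L_f (1 + C) = L_F`.
A Leslie matrix with nonzero last fertility has trivial kernel: the subdiagonal shifts `v`, so
`L v = 0` kills all coordinates of `v` but the last, and the first row then reads `F_N v_N = 0`.
-/

open Matrix

lemma leslieSimple_eq_leslieGeneral (N : ℕ) (f : ℝ) :
    leslieSimple N f = leslieGeneral N fun _ => f := rfl

section mulVec

variable {n : ℕ} (F : Fin (n + 1) → ℝ) (v : Fin (n + 1) → ℝ)

lemma leslieGeneral_mulVec_zero : (leslieGeneral (n + 1) F *ᵥ v) 0 = F ⬝ᵥ v := by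
  simp [leslieGeneral, mulVec, dotProduct]

lemma leslieGeneral_mulVec_succ (i : Fin n) :
    (leslieGeneral (n + 1) F *ᵥ v) i.succ = v i.castSucc := by
  rw [mulVec, dotProduct, Finset.sum_eq_single i.castSucc] <;> simp [leslieGeneral, Fin.ext_iff]
  intros
  omega

end mulVec

lemma eq_zero_of_leslieGeneral_mulVec_eq_zero {n : ℕ} {F v : Fin (n + 1) → ℝ}
    (hF : F (Fin.last n) ≠ 0) (hv : leslieGeneral (n + 1) F *ᵥ v = 0) : v = 0 := by
  have hinit (i : Fin n) : v i.castSucc = 0 := by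
    rw [← leslieGeneral_mulVec_succ F v i, hv, Pi.zero_apply]
  have hlast : v (Fin.last n) = 0 := by
    have hrow := leslieGeneral_mulVec_zero F v
    rw [hv, Pi.zero_apply, dotProduct, Fin.sum_univ_castSucc] at hrow
    simpa [hinit, hF] using hrow.symm
  funext i
  induction i using Fin.lastCases with
  | last => exact hlast
  | cast i => exact hinit i

theorem isUnit_leslieGeneral {n : ℕ} {F : Fin (n + 1) → ℝ} (hF : F (Fin.last n) ≠ 0) :
    IsUnit (leslieGeneral (n + 1) F) := by
  rw [isUnit_iff_isUnit_det, isUnit_iff_ne_zero]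
  intro hdet
  obtain ⟨v, hv0, hv⟩ := exists_mulVec_eq_zero_iff.mpr hdet
  exact hv0 (eq_zero_of_leslieGeneral_mulVec_eq_zero hF hv)

theorem isUnit_leslieSimple {N : ℕ} {f : ℝ} (hf : f ≠ 0) : IsUnit (leslieSimple N f) := by
  cases N with
  | zero => exact isUnit_of_subsingleton _
  | succ n => rw [leslieSimple_eq_leslieGeneral]; exact isUnit_leslieGeneral hf

lemma leslieSimple_mul_leslieCorrection_apply (N : ℕ) (F : Fin N → ℝ) (f : ℝ) (i j : Fin N) :
    (leslieSimple N f * leslieCorrection N F f) i j =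
      if (i : ℕ) = 0 then f * (F j / f - 1) else 0 := by
  have hi := i.isLt
  rw [mul_apply, Finset.sum_eq_single ⟨N - 1, by omega⟩]
  · simp only [leslieSimple, leslieCorrection]
    split_ifs <;> first | omega | ring
  · intro k _ hk
    simp [leslieCorrection, Fin.ext_iff] at hk ⊢
    omega
  · simp

theorem leslieSimple_mul_one_add_leslieCorrection {N : ℕ} (F : Fin N → ℝ) {f : ℝ} (hf : f ≠ 0) :
    leslieSimple N f * (1 + leslieCorrection N F f) = leslieGeneral N F := by
  ext i j
  rw [mul_add, mul_one, Matrix.add_apply, leslieSimple_mul_leslieCorrection_apply]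
  simp only [leslieSimple, leslieGeneral]
  split_ifs
  · field_simp
    ring
  all_goals simp

theorem leslie_inv_mul_general_general (N : ℕ) (F : Fin N → ℝ) (f : ℝ) (hf0 : f ≠ 0) :
    IsUnit (leslieSimple N f) ∧
      (leslieSimple N f)⁻¹ * leslieGeneral N F = 1 + leslieCorrection N F f := by
  have hL := isUnit_leslieSimple (N := N) hf0
  refine ⟨hL, ?_⟩
  rw [← leslieSimple_mul_one_add_leslieCorrection F hf0]
  exact nonsing_inv_mul_cancel_left _ _ ((isUnit_iff_isUnit_det _).mp hL)

/-- If `f = (f₁ + ⋯ + f_N)/N ≠ 0`, then the simple Leslie matrix `L_f` is invertible and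
`L_f⁻¹ · L_{f₁,…,f_N} = I + C`, where `C` has last row `(f₁/f - 1, …, f_N/f - 1)` and
zeros elsewhere. -/
theorem leslie_inv_mul_general (N : ℕ) (hN : 1 ≤ N) (F : Fin N → ℝ) (f : ℝ)
    (hf : f = (∑ i, F i) / N) (hf0 : f ≠ 0) :
    IsUnit (leslieSimple N f) ∧
      (leslieSimple N f)⁻¹ * leslieGeneral N F = 1 + leslieCorrection N F f :=
  leslie_inv_mul_general_general N F f hf0
end

section
/- Let l_a, l_b, k, m be real numbers with l_a, l_b, k, m > 0 and 2·k·√m > |l_b − l_a| (so that the roots of λ² − (l_a + l_b)·λ + (k²·m + l_a·l_b) are non-real complex conjugates). Let α : ℕ → ℝ satisfy α_{n+2} = (l_a + l_b)·α_{n+1} − (k²·m + l_a·l_b)·α_n for all n, with α_0 > 0 and α_1 > 0. Then there exists n with α_n ≤ 0. -/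
/-- In the scalar Leslie predator–prey model, if the predation rate is large enough that
`2k√m > |l_b - l_a|` (so the roots of `λ² - (l_a + l_b)λ + (k²m + l_a·l_b)` are non-real
complex conjugates), then any population sequence `α` satisfying the second-order
recurrence with positive initial values eventually becomes nonpositive (extinction). -/
theorem extinction_complex_eigenvalues (la lb k m : ℝ)
    (hla : 0 < la) (hlb : 0 < lb) (hk : 0 < k) (hm : 0 < m)
    (hcond : |lb - la| < 2 * k * Real.sqrt m)
    (α : ℕ → ℝ)
    (hrec : ∀ n, α (n + 2) = (la + lb) * α (n + 1) - (k ^ 2 * m + la * lb) * α n)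
    (h0 : 0 < α 0) (h1 : 0 < α 1) :
    ∃ n, α n ≤ 0 := by
  by_contra h
  push_neg at h
  set p : ℝ := la + lb with hp
  set q : ℝ := k ^ 2 * m + la * lb with hq
  -- discriminant negative
  have hsq : (lb - la) ^ 2 < 4 * (k ^ 2 * m) := by
    have h2 : (0:ℝ) ≤ 2 * k * Real.sqrt m := by positivity
    have := sq_lt_sq' (by linarith [abs_nonneg (lb - la), neg_abs_le (lb - la)] : -(2 * k * Real.sqrt m) < lb - la) (lt_of_le_of_lt (le_abs_self _) hcond)
    have hs : Real.sqrt m ^ 2 = m := Real.sq_sqrt hm.le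
    nlinarith [this]
  have hc : p ^ 2 < 4 * q := by
    simp only [hp, hq]; nlinarith
  set c : ℝ := q - p ^ 2 / 4 with hcdef
  have hcpos : 0 < c := by simp only [hcdef]; linarith
  set β : ℕ → ℝ := fun n => α (n + 1) / α n with hβ
  have hβpos : ∀ n, 0 < β n := fun n => div_pos (h _) (h n)
  have hstep : ∀ n, β (n + 1) ≤ β n - c / β n := by
    intro n
    have hαn := (h n).ne'
    have hαn1 := (h (n+1)).ne'
    have hrecn := hrec n
    have hb : β (n + 1) = p - q / β n := by
      simp only [hβ]
      field_simp
      nlinarith [hrec n]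
    rw [hb, ← sub_nonneg]
    have hbn := hβpos n
    have heq : β n - c / β n - (p - q / β n) = (β n ^ 2 - p * β n + q - c) / β n := by
      field_simp; ring
    rw [heq]
    apply div_nonneg _ hbn.le
    have key : β n ^ 2 - p * β n + q - c = (β n - p / 2) ^ 2 := by
      rw [hcdef]; ring
    rw [key]; positivity
  have hmono : ∀ n, β n ≤ β 0 := by
    intro n
    induction n with
    | zero => exact le_refl _
    | succ k ih =>
      have := hstep k
      have : β (k+1) ≤ β k := by
        have := div_pos hcpos (hβpos k)
        linarith [hstep k]
      linarith
  have hlin : ∀ n, β n ≤ β 0 - n * (c / β 0) := by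
    intro n
    induction n with
    | zero => simp
    | succ k ih =>
      have h1' : c / β 0 ≤ c / β k := by
        apply div_le_div_of_nonneg_left hcpos.le (hβpos k) (hmono k)
      have := hstep k
      push_cast
      linarith
  obtain ⟨n, hn⟩ := exists_nat_gt (β 0 * β 0 / c)
  have hβ0 := hβpos 0
  have hgt : β 0 < ↑n * (c / β 0) := by
    rw [mul_div_assoc', lt_div_iff₀ hβ0]
    rwa [div_lt_iff₀ hcpos] at hn
  linarith [hlin n, hβpos n, hgt]
end

section
/- Let λ, ρ, m, k be real numbers with λ, ρ, m, k > 0, and let i denote the imaginary unit. Then the two complex roots of z² − i·(ρ + 1)·λ·z − (ρ·λ² − m·k²) = 0 are purely imaginary, namely z = i·((1 + ρ)·λ ± √((1 − ρ)²·λ² + 4·m·k²))/2, and the root of maximal modulus has modulus ((1 + ρ)·λ + √((1 − ρ)²·λ² + 4·m·k²))/2. -/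
/-!
Since `z² - i (a + b) z - a b = (z - i a)(z - i b)`, the roots are `i a` and `i b` where `a, b`
are the real roots of `x² - p x + q` with `p = (1 + ρ) λ`, `q = ρ λ² - m k²`; their discriminant
`p² - 4q = (1 - ρ)² λ² + 4 m k²` is nonnegative. With `s = √(p² - 4q)`, the moduli are
`|p ± s| / 2`, and `|p - s| ≤ p + s` because `p, s ≥ 0`.
-/

open Complex

theorem sq_sub_I_mul_add_mul_sub_mul_eq_zero_iff (a b : ℝ) (z : ℂ) :
    z ^ 2 - I * ((a + b : ℝ) : ℂ) * z - ((a * b : ℝ) : ℂ) = 0 ↔ z = I * a ∨ z = I * b := by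
  have factor : z ^ 2 - I * ((a + b : ℝ) : ℂ) * z - ((a * b : ℝ) : ℂ)
      = (z - I * a) * (z - I * b) := by
    push_cast
    linear_combination (-(a : ℂ) * b) * I_sq
  rw [factor, mul_eq_zero, sub_eq_zero, sub_eq_zero]

theorem Complex.norm_I_mul_ofReal (x : ℝ) : ‖I * (x : ℂ)‖ = |x| := by
  rw [norm_mul, norm_I, one_mul, norm_real, Real.norm_eq_abs]

theorem half_add_sqrt_mul_half_sub_sqrt {p q : ℝ} (h : 0 ≤ p ^ 2 - 4 * q) :
    (p + √(p ^ 2 - 4 * q)) / 2 * ((p - √(p ^ 2 - 4 * q)) / 2) = q := by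
  linear_combination -(Real.sq_sqrt h) / 4

theorem sq_sub_I_mul_sub_eq_zero_iff {p q : ℝ} (h : 0 ≤ p ^ 2 - 4 * q) (z : ℂ) :
    z ^ 2 - I * (p : ℂ) * z - (q : ℂ) = 0 ↔
      z = I * (((p + √(p ^ 2 - 4 * q)) / 2 : ℝ) : ℂ) ∨
        z = I * (((p - √(p ^ 2 - 4 * q)) / 2 : ℝ) : ℂ) := by
  have sum_eq : (p + √(p ^ 2 - 4 * q)) / 2 + (p - √(p ^ 2 - 4 * q)) / 2 = p := by ring
  rw [← sq_sub_I_mul_add_mul_sub_mul_eq_zero_iff, sum_eq, half_add_sqrt_mul_half_sub_sqrt h]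

theorem norm_I_mul_half_sub_le_norm_I_mul_half_add {p s : ℝ} (hp : 0 ≤ p) (hs : 0 ≤ s) :
    ‖I * (((p - s) / 2 : ℝ) : ℂ)‖ ≤ ‖I * (((p + s) / 2 : ℝ) : ℂ)‖ := by
  rw [norm_I_mul_ofReal, norm_I_mul_ofReal, abs_div, abs_div, abs_of_nonneg (add_nonneg hp hs)]
  gcongr
  exact (abs_sub p s).trans_eq (by rw [abs_of_nonneg hp, abs_of_nonneg hs])

theorem complex_model_dominant_root_general (lam ρ m k : ℝ)
    (hlam : 0 < lam) (hρ : 0 < ρ) (hm : 0 < m) :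
    ∃ z₁ z₂ : ℂ,
      z₁ = Complex.I * ((((1 + ρ) * lam +
          Real.sqrt ((1 - ρ) ^ 2 * lam ^ 2 + 4 * m * k ^ 2)) / 2 : ℝ) : ℂ) ∧
      z₂ = Complex.I * ((((1 + ρ) * lam -
          Real.sqrt ((1 - ρ) ^ 2 * lam ^ 2 + 4 * m * k ^ 2)) / 2 : ℝ) : ℂ) ∧
      (∀ z : ℂ, z ^ 2 - Complex.I * (((ρ + 1) * lam : ℝ) : ℂ) * z
          - (((ρ * lam ^ 2 - m * k ^ 2 : ℝ)) : ℂ) = 0 ↔ z = z₁ ∨ z = z₂) ∧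
      z₁.re = 0 ∧ z₂.re = 0 ∧
      ‖z₂‖ ≤ ‖z₁‖ ∧
      ‖z₁‖ =
        ((1 + ρ) * lam + Real.sqrt ((1 - ρ) ^ 2 * lam ^ 2 + 4 * m * k ^ 2)) / 2 := by
  rw [show (ρ + 1) * lam = (1 + ρ) * lam by ring]
  set p := (1 + ρ) * lam
  have hp : 0 ≤ p := by positivity
  have hdisc : (1 - ρ) ^ 2 * lam ^ 2 + 4 * m * k ^ 2 = p ^ 2 - 4 * (ρ * lam ^ 2 - m * k ^ 2) := by
    ring
  have hD : 0 ≤ p ^ 2 - 4 * (ρ * lam ^ 2 - m * k ^ 2) := hdisc ▸ by positivity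
  rw [hdisc]
  refine ⟨_, _, rfl, rfl, sq_sub_I_mul_sub_eq_zero_iff hD, by simp, by simp,
    norm_I_mul_half_sub_le_norm_I_mul_half_add hp (Real.sqrt_nonneg _), ?_⟩
  rw [norm_I_mul_ofReal, abs_of_nonneg (by positivity)]

/-- For `λ, ρ, m, k > 0`, the two complex roots of
`z² - i(ρ+1)λz - (ρλ² - mk²) = 0` are purely imaginary, namely
`z = i((1+ρ)λ ± √((1-ρ)²λ² + 4mk²))/2`, and the root of maximal modulus has modulus
`((1+ρ)λ + √((1-ρ)²λ² + 4mk²))/2`. -/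
theorem complex_model_dominant_root (lam ρ m k : ℝ)
    (hlam : 0 < lam) (hρ : 0 < ρ) (hm : 0 < m) (hk : 0 < k) :
    ∃ z₁ z₂ : ℂ,
      z₁ = Complex.I * ((((1 + ρ) * lam +
          Real.sqrt ((1 - ρ) ^ 2 * lam ^ 2 + 4 * m * k ^ 2)) / 2 : ℝ) : ℂ) ∧
      z₂ = Complex.I * ((((1 + ρ) * lam -
          Real.sqrt ((1 - ρ) ^ 2 * lam ^ 2 + 4 * m * k ^ 2)) / 2 : ℝ) : ℂ) ∧
      (∀ z : ℂ, z ^ 2 - Complex.I * (((ρ + 1) * lam : ℝ) : ℂ) * z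
          - (((ρ * lam ^ 2 - m * k ^ 2 : ℝ)) : ℂ) = 0 ↔ z = z₁ ∨ z = z₂) ∧
      z₁.re = 0 ∧ z₂.re = 0 ∧
      ‖z₂‖ ≤ ‖z₁‖ ∧
      ‖z₁‖ =
        ((1 + ρ) * lam + Real.sqrt ((1 - ρ) ^ 2 * lam ^ 2 + 4 * m * k ^ 2)) / 2 :=
  complex_model_dominant_root_general lam ρ m k hlam hρ hm
end

section
/- Let N ≥ 1 be an integer and f a real number with f ≥ 1/N, and let L = L_f be the simple Leslie matrix of order N. Let k, m, a, b be real numbers with k, m, a, b > 0, and let α, β : ℕ → ℝ^N satisfy α_{n+1} = L·α_n − k·m·β_n and β_{n+1} = L·β_n − k·α_n for all n ≥ 0, with initial conditions α_0 = a·(1, …, 1)ᵀ and β_0 = b·(1, …, 1)ᵀ. If a − √m·b > 0, then there exists n₀ such that for all n ≥ n₀, every entry of α_n is strictly positive and every entry of β_n is strictly negative (so the β-species goes extinct while the α-species grows). -/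
open Filter Topology

namespace Matrix

section Nonneg

variable {n R : Type*} [Fintype n] [Semiring R] [PartialOrder R] [IsOrderedRing R]
  {M : Matrix n n R}

theorem mulVec_nonneg (hM : ∀ i j, 0 ≤ M i j) {x : n → R} (hx : 0 ≤ x) : 0 ≤ M *ᵥ x :=
  fun i => dotProduct_nonneg_of_nonneg (hM i) hx

theorem mulVec_le_mulVec_of_nonneg (hM : ∀ i j, 0 ≤ M i j) {x y : n → R} (hxy : x ≤ y) :
    M *ᵥ x ≤ M *ᵥ y :=
  fun i => dotProduct_le_dotProduct_of_nonneg_left hxy (hM i)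

theorem mulVec_le_mulVec_of_le {B : Matrix n n R} (hMB : ∀ i j, M i j ≤ B i j) {x : n → R}
    (hx : 0 ≤ x) : M *ᵥ x ≤ B *ᵥ x :=
  fun i => dotProduct_le_dotProduct_of_nonneg_right (hMB i) hx

variable [DecidableEq n]

theorem pow_mulVec_le_of_mulVec_le (hM : ∀ i j, 0 ≤ M i j) {y : ℕ → n → R} {k : ℕ}
    (h : ∀ t, M *ᵥ y (k + t) ≤ y (k + t + 1)) (t : ℕ) : M ^ t *ᵥ y k ≤ y (k + t) := by
  induction t with
  | zero => simp
  | succ t ih =>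
    rw [pow_succ', ← mulVec_mulVec]
    exact (mulVec_le_mulVec_of_nonneg hM ih).trans (h t)

end Nonneg

theorem pow_mulVec_eq_of_mulVec_eq {n R : Type*} [Fintype n] [DecidableEq n] [Semiring R]
    {M : Matrix n n R} {y : ℕ → n → R} (h : ∀ t, M *ᵥ y t = y (t + 1)) (k t : ℕ) :
    M ^ t *ᵥ y k = y (k + t) := by
  induction t with
  | zero => simp
  | succ t ih => rw [pow_succ', ← mulVec_mulVec, ih, h, add_assoc]

theorem pow_succ_apply_pos {n R : Type*} [Fintype n] [DecidableEq n] [Semiring R] [LinearOrder R]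
    [IsStrictOrderedRing R] {M : Matrix n n R} (hM : ∀ i j, 0 ≤ M i j) {k : ℕ} (hk : 0 < k)
    (h : ∀ i j, 0 < (M ^ k) i j) (i j : n) : 0 < (M ^ (k + 1)) i j := by
  obtain ⟨k, rfl⟩ := Nat.exists_eq_add_of_lt hk
  obtain ⟨l, -, hl⟩ : ∃ l ∈ Finset.univ, 0 < (M ^ k) i l * M l j := by
    have := h i j
    rw [zero_add, pow_succ, mul_apply] at this
    exact Finset.exists_lt_of_sum_lt (f := fun _ => 0) (by simpa using this)
  have hMlj : 0 < M l j := pos_of_mul_pos_right hl (pow_apply_nonneg hM k i l)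
  rw [pow_succ, mul_apply]
  exact (mul_pos (h i l) hMlj).trans_le (Finset.single_le_sum
    (fun l _ => mul_nonneg (pow_apply_nonneg hM _ i l) (hM l j)) (Finset.mem_univ l))

theorem eventually_smul_le_of_pos {m n : Type*} [Finite m] [Finite n] {M : Matrix m n ℝ}
    (hM : ∀ i j, 0 < M i j) (B : Matrix m n ℝ) :
    ∀ᶠ η in 𝓝 (0 : ℝ), ∀ i j, (η • B) i j ≤ M i j := by
  simp only [eventually_all]
  intro i j
  have : Tendsto (fun η : ℝ => η * B i j) (𝓝 0) (𝓝 0) :=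
    Continuous.tendsto' (by fun_prop) 0 0 (zero_mul _)
  exact (this.eventually (gt_mem_nhds (hM i j))).mono fun _ h => h.le

end Matrix

open Matrix

section CoupledOrbit

variable {ι : Type*} [Fintype ι] {L : Matrix ι ι ℝ} {c : ℝ}

def IsCoupledOrbit (L : Matrix ι ι ℝ) (c : ℝ) (p q : ℕ → ι → ℝ) : Prop :=
  ∀ n, p (n + 1) = L *ᵥ p n + c • q n ∧ q (n + 1) = L *ᵥ q n + c • p n

variable {p q : ℕ → ι → ℝ}

theorem IsCoupledOrbit.smul_add_smul (h : IsCoupledOrbit L c p q) (a b : ℝ) :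
    IsCoupledOrbit L c (fun n => a • p n + b • q n) (fun n => a • q n + b • p n) := fun n => by
  obtain ⟨hp, hq⟩ := h n
  simp only [hp, hq, mulVec_add, mulVec_smul]
  constructor <;> module

theorem IsCoupledOrbit.total (h : IsCoupledOrbit L c p q) :
    IsCoupledOrbit L c (fun n => p n + q n) (fun n => p n + q n) := by
  simpa [add_comm (q _)] using h.smul_add_smul 1 1

theorem IsCoupledOrbit.nonneg_add (h : IsCoupledOrbit L c p q) (hL : ∀ i j, 0 ≤ L i j)
    (hc : 0 ≤ c) {n : ℕ} (hp : 0 ≤ p n) (hq : 0 ≤ q n) (t : ℕ) :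
    0 ≤ p (n + t) ∧ 0 ≤ q (n + t) := by
  induction t with
  | zero => exact ⟨hp, hq⟩
  | succ t ih =>
    rw [← add_assoc, (h _).1, (h _).2]
    exact ⟨add_nonneg (mulVec_nonneg hL ih.1) (smul_nonneg hc ih.2),
      add_nonneg (mulVec_nonneg hL ih.2) (smul_nonneg hc ih.1)⟩

theorem IsCoupledOrbit.pos_add (h : IsCoupledOrbit L c p q) (hL : ∀ i j, 0 ≤ L i j)
    (hc : 0 < c) {n : ℕ} (hn : ∀ i, 0 < p n i ∧ 0 < q n i) (t : ℕ) (i : ι) :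
    0 < p (n + t) i ∧ 0 < q (n + t) i := by
  induction t generalizing i with
  | zero => exact hn i
  | succ t ih =>
    rw [← add_assoc, (h _).1, (h _).2]
    exact ⟨add_pos_of_nonneg_of_pos (mulVec_nonneg hL (fun j => (ih j).1.le) i)
        (mul_pos hc (ih i).2),
      add_pos_of_nonneg_of_pos (mulVec_nonneg hL (fun j => (ih j).2.le) i)
        (mul_pos hc (ih i).1)⟩

variable [DecidableEq ι] {T : ℕ}

theorem eventually_smul_add_le_of_isCoupledOrbit (hL : ∀ i j, 0 ≤ L i j) (hc : 0 < c)
    (hT0 : 0 < T) (hT : ∀ i j, 0 < (L ^ T) i j) :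
    ∀ᶠ η in 𝓝 (0 : ℝ), ∀ p q, IsCoupledOrbit L c p q → ∀ n, 0 ≤ p n → 0 ≤ q n →
      η • (p (n + (T + 1)) + q (n + (T + 1))) ≤ p (n + (T + 1)) := by
  set A := L + c • (1 : Matrix ι ι ℝ)
  filter_upwards [eventually_smul_le_of_pos (pow_succ_apply_pos hL hT0 hT) (A ^ (T + 1)),
    eventually_smul_le_of_pos (fun i j => mul_pos hc (hT i j)) (A ^ (T + 1))] with η h₁ h₂
  intro p q h n hp hq
  have hnonneg := h.nonneg_add hL hc.le hp hq
  have hsum : A ^ (T + 1) *ᵥ (p n + q n) = p (n + (T + 1)) + q (n + (T + 1)) :=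
    pow_mulVec_eq_of_mulVec_eq (y := fun n => p n + q n)
      (fun t => by simp [A, (h.total t).1, add_mulVec, smul_mulVec]) n (T + 1)
  have hsub : L ^ T *ᵥ p (n + 1) ≤ p (n + 1 + T) :=
    pow_mulVec_le_of_mulVec_le hL (fun t => by
      rw [(h _).1]
      exact le_add_of_nonneg_right
        (smul_nonneg hc.le (by simpa only [add_assoc] using (hnonneg (1 + t)).2))) T
  calc η • (p (n + (T + 1)) + q (n + (T + 1)))
      = (η • A ^ (T + 1)) *ᵥ p n + (η • A ^ (T + 1)) *ᵥ q n := by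
        rw [← hsum, smul_mulVec, smul_mulVec, mulVec_add, smul_add]
    _ ≤ L ^ (T + 1) *ᵥ p n + (c • L ^ T) *ᵥ q n :=
        add_le_add (mulVec_le_mulVec_of_le h₁ hp) (mulVec_le_mulVec_of_le h₂ hq)
    _ = L ^ T *ᵥ p (n + 1) := by
        rw [(h n).1, mulVec_add, mulVec_mulVec, ← pow_succ, mulVec_smul, smul_mulVec]
    _ ≤ p (n + (T + 1)) := by rwa [add_comm T, ← add_assoc]

theorem exists_contraction_of_isCoupledOrbit (hL : ∀ i j, 0 ≤ L i j) (hc : 0 < c)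
    (hT0 : 0 < T) (hT : ∀ i j, 0 < (L ^ T) i j) :
    ∃ θ : ℝ, 0 ≤ θ ∧ θ < 1 ∧ ∀ p q, IsCoupledOrbit L c p q → ∀ (ε : ℝ) n,
      (∀ i, |p n i - q n i| ≤ ε * (p n i + q n i)) →
      ∀ i, |p (n + (T + 1)) i - q (n + (T + 1)) i| ≤
        θ * ε * (p (n + (T + 1)) i + q (n + (T + 1)) i) := by
  obtain ⟨η, hcone, hη⟩ := (((eventually_smul_add_le_of_isCoupledOrbit hL hc hT0 hT).filter_mono
    nhdsWithin_le_nhds).and (Ioo_mem_nhdsGT (by norm_num : (0 : ℝ) < 1 / 2))).exists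
  refine ⟨1 - 2 * η, by linarith [hη.2], by linarith [hη.1], fun p q h ε n hn i => ?_⟩
  have hu₀ : 0 ≤ (ε + 1) • p n + (ε - 1) • q n := fun j => by
    simp only [Pi.add_apply, Pi.smul_apply, smul_eq_mul, Pi.zero_apply]
    linarith [abs_le.1 (hn j)]
  have hv₀ : 0 ≤ (ε + 1) • q n + (ε - 1) • p n := fun j => by
    simp only [Pi.add_apply, Pi.smul_apply, smul_eq_mul, Pi.zero_apply]
    linarith [abs_le.1 (hn j)]
  have hu := hcone _ _ (h.smul_add_smul (ε + 1) (ε - 1)) n hu₀ hv₀ i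
  have hv := hcone _ _ (h.smul_add_smul (ε - 1) (ε + 1)) n
    (by rwa [add_comm]) (by rwa [add_comm]) i
  simp only [Pi.add_apply, Pi.smul_apply, smul_eq_mul] at hu hv
  rw [abs_le]
  constructor <;> linarith

theorem IsCoupledOrbit.eventually_pos (h : IsCoupledOrbit L c p q) (hL : L.IsPrimitive)
    (hc : 0 < c) (h0 : ∀ i, 0 < p 0 i + q 0 i) :
    ∀ᶠ n in atTop, ∀ i, 0 < p n i ∧ 0 < q n i := by
  obtain ⟨hLnn, T, hT0, hT⟩ := hL
  obtain ⟨θ, hθ0, hθ1, hcontr⟩ := exists_contraction_of_isCoupledOrbit hLnn hc hT0 hT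
  obtain ⟨ε, hε⟩ : ∃ ε : ℝ, ∀ i, |p 0 i - q 0 i| ≤ ε * (p 0 i + q 0 i) :=
    (eventually_all.2 fun i => (tendsto_id.atTop_mul_const (h0 i)).eventually_ge_atTop _).exists
  have hiter : ∀ j i, |p (j * (T + 1)) i - q (j * (T + 1)) i| ≤
      θ ^ j * ε * (p (j * (T + 1)) i + q (j * (T + 1)) i) := by
    intro j
    induction j with
    | zero => simpa using hε
    | succ j ih =>
      rw [add_one_mul, pow_succ', mul_assoc θ]
      exact hcontr p q h _ _ ih
  have hsum : ∀ n i, 0 < p n i + q n i := fun n i =>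
    (h.total.pos_add hLnn hc (n := 0) (fun i => ⟨h0 i, h0 i⟩) n i).1.trans_eq (by simp)
  obtain ⟨j, hj⟩ := (((tendsto_pow_atTop_nhds_zero_of_lt_one hθ0 hθ1).mul_const ε).eventually
    (gt_mem_nhds (by simp : (0 : ℝ) * ε < 1))).exists
  have hpos : ∀ i, 0 < p (j * (T + 1)) i ∧ 0 < q (j * (T + 1)) i := fun i => by
    have := abs_lt.1 ((hiter j i).trans_lt (mul_lt_of_lt_one_left (hsum _ i) hj))
    constructor <;> linarith
  filter_upwards [eventually_ge_atTop (j * (T + 1))] with n hn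
  obtain ⟨t, rfl⟩ := Nat.exists_eq_add_of_le hn
  exact h.pos_add hLnn hc hpos t

end CoupledOrbit

theorem leslieSimple_nonneg {N : ℕ} {f : ℝ} (hf : 0 ≤ f) (i j : Fin N) :
    0 ≤ leslieSimple N f i j := by
  unfold leslieSimple
  split_ifs <;> norm_num [hf]

theorem leslieSimple_pow_apply_pos {N : ℕ} {f : ℝ} (hf : 0 < f) :
    ∀ (s : ℕ) (i j : Fin N), i.val < s → 0 < (leslieSimple N f ^ s) i j
  | 0, _, _, hi => absurd hi (Nat.not_lt_zero _)
  | 1, i, j, hi => by simpa [leslieSimple, show i.val = 0 by omega] using hf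
  | s + 2, i, j, hi => by
    let k : Fin N := ⟨i.val - 1, by omega⟩
    have hik : 0 < leslieSimple N f i k := by
      unfold leslieSimple
      split_ifs with h0 h1 <;> first | exact hf | exact one_pos | (simp [k] at h1; omega)
    rw [pow_succ', mul_apply]
    exact (mul_pos hik (leslieSimple_pow_apply_pos hf (s + 1) k j (by simp [k]; omega))).trans_le
      (Finset.single_le_sum (fun l _ => mul_nonneg (leslieSimple_nonneg hf.le i l)
        (pow_apply_nonneg (leslieSimple_nonneg hf.le) _ l j)) (Finset.mem_univ k))

theorem leslieSimple_isPrimitive {N : ℕ} {f : ℝ} (hf : 0 < f) : (leslieSimple N f).IsPrimitive :=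
  ⟨leslieSimple_nonneg hf.le, N + 1, N.succ_pos,
    fun i j => leslieSimple_pow_apply_pos hf _ i j (by omega)⟩

theorem last_species_standing_general (N : ℕ) (hN : 1 ≤ N) (f : ℝ) (hf : 1 / (N : ℝ) ≤ f)
    (k m a b : ℝ) (hk : 0 < k) (hm : 0 < m)
    (α β : ℕ → Fin N → ℝ)
    (hα : ∀ n, α (n + 1) = (leslieSimple N f).mulVec (α n) - (k * m) • β n)
    (hβ : ∀ n, β (n + 1) = (leslieSimple N f).mulVec (β n) - k • α n)
    (hα0 : α 0 = fun _ => a) (hβ0 : β 0 = fun _ => b)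
    (hD : 0 < a - Real.sqrt m * b) :
    ∃ n₀ : ℕ, ∀ n ≥ n₀, (∀ i, 0 < α n i) ∧ (∀ i, β n i < 0) := by
  have hf0 : 0 < f := (one_div_pos.2 (Nat.cast_pos.2 hN)).trans_le hf
  have hsqrt : 0 < Real.sqrt m := Real.sqrt_pos.2 hm
  have hsq : Real.sqrt m * Real.sqrt m = m := Real.mul_self_sqrt hm.le
  have horbit : IsCoupledOrbit (leslieSimple N f) (k * Real.sqrt m) α
      (fun n => -Real.sqrt m • β n) := fun n => by
    constructor <;> ext i <;>
      simp only [hα, hβ, mulVec_smul, Pi.add_apply, Pi.sub_apply, Pi.smul_apply,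
        smul_eq_mul]
    · linear_combination (k * β n i) * hsq
    · ring
  obtain ⟨n₀, hn₀⟩ := eventually_atTop.1 (horbit.eventually_pos (leslieSimple_isPrimitive hf0)
    (mul_pos hk hsqrt) (fun i => by simp [hα0, hβ0]; linarith))
  refine ⟨n₀, fun n hn => ⟨fun i => (hn₀ n hn i).1, fun i => ?_⟩⟩
  have := (hn₀ n hn i).2
  simp only [Pi.smul_apply, smul_eq_mul, neg_mul, neg_pos] at this
  exact neg_of_mul_neg_right this hsqrt.le

/-- Last Species Standing (linear competitive model): with `L = L_f`, `f ≥ 1/N`,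
`k, m, a, b > 0`, dynamics `α_{n+1} = L·α_n - k·m·β_n`, `β_{n+1} = L·β_n - k·α_n` and
constant initial vectors `α_0 = a·(1,…,1)ᵀ`, `β_0 = b·(1,…,1)ᵀ`: if `a - √m·b > 0`,
then eventually every entry of `α_n` is strictly positive and every entry of `β_n` is
strictly negative (the β-species goes extinct while the α-species grows). -/
theorem last_species_standing (N : ℕ) (hN : 1 ≤ N) (f : ℝ) (hf : 1 / (N : ℝ) ≤ f)
    (k m a b : ℝ) (hk : 0 < k) (hm : 0 < m) (ha : 0 < a) (hb : 0 < b)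
    (α β : ℕ → Fin N → ℝ)
    (hα : ∀ n, α (n + 1) = (leslieSimple N f).mulVec (α n) - (k * m) • β n)
    (hβ : ∀ n, β (n + 1) = (leslieSimple N f).mulVec (β n) - k • α n)
    (hα0 : α 0 = fun _ => a) (hβ0 : β 0 = fun _ => b)
    (hD : 0 < a - Real.sqrt m * b) :
    ∃ n₀ : ℕ, ∀ n ≥ n₀, (∀ i, 0 < α n i) ∧ (∀ i, β n i < 0) :=
  last_species_standing_general N hN f hf k m a b hk hm α β hα hβ hα0 hβ0 hD
end
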